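/- Under the identification of morphisms between finite biproducts of copies of the monoidal unit with matrices over the commutative semiring R ≅ Hom(1,1): the tensor product of two such morphisms corresponds (up to the canonical distributivity isomorphism reindexing ⊕_{i=1}^n 1 ⊗ ⊕_{j=1}^m 1 ≅ ⊕_{k=1}^{nm} 1) to the Kronecker product of the corresponding matrices, and the biproduct f ⊕ h corresponds to the block-diagonal direct sum of matrices. -/

import Mathlib

/-!
By interchange, an entry of `⦃M⦄ ⊗ ⦃N⦄` is `scal (M i j) ⊗ scal (N k l)`. Since
`λ_ (𝟙_ C) = ρ_ (𝟙_ C)`, the tensor product of two endomorphisms of the unit is their composite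
conjugated by the unitor, and `scal` turns that composite into the product of the entries.
-/

open CategoryTheory CategoryTheory.Limits CategoryTheory.MonoidalCategory ZeroObject

variable {C : Type*} [Category C] [HasZeroMorphisms C] [HasZeroObject C]
  [HasBinaryBiproducts C] [HasFiniteBiproducts C] [MonoidalCategory C]
  [SymmetricCategory C]

/-- The biproduct-induced sum of parallel morphisms: f + g := ∇ ∘ (f ⊕ g) ∘ Δ. -/
noncomputable def badd {H K : C} (f g : H ⟶ K) : H ⟶ K :=
  biprod.lift (𝟙 H) (𝟙 H) ≫ biprod.map f g ≫ biprod.desc (𝟙 K) (𝟙 K)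

/-- The left-distributor dist_ℓ := ((id ⊗ π_ℓ) ⊕ (id ⊗ π_r)) ∘ Δ. -/
noncomputable def distL (H K L : C) : H ⊗ (K ⊞ L) ⟶ (H ⊗ K) ⊞ (H ⊗ L) :=
  biprod.lift (𝟙 H ⊗ₘ biprod.fst) (𝟙 H ⊗ₘ biprod.snd)

/-- The morphism ⦃M⦄ : ⊕ⁿ 1 ⟶ ⊕ᵐ 1 associated to a matrix M over R via scal. -/
noncomputable def matMor {R : Type*} (scal : R → (𝟙_ C ⟶ 𝟙_ C)) {n m : ℕ}
    (M : Matrix (Fin n) (Fin m) R) :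
    (⨁ fun _ : Fin n => 𝟙_ C) ⟶ (⨁ fun _ : Fin m => 𝟙_ C) :=
  biproduct.matrix fun i j => scal (M i j)

theorem tensorHom_eq_comp_of_unit {D : Type*} [Category D] [MonoidalCategory D]
    (f g : 𝟙_ D ⟶ 𝟙_ D) : f ⊗ₘ g = (λ_ (𝟙_ D)).hom ≫ f ≫ g ≫ (λ_ (𝟙_ D)).inv := by
  simp [MonoidalCategory.tensorHom_def, unitors_equal]

theorem ι_matMor_π {D : Type*} [Category D] [HasZeroMorphisms D] [HasFiniteBiproducts D]
    [MonoidalCategory D] {R : Type*} (scal : R → (𝟙_ D ⟶ 𝟙_ D)) {n m : ℕ}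
    (M : Matrix (Fin n) (Fin m) R) (i : Fin n) (j : Fin m) :
    biproduct.ι _ i ≫ matMor scal M ≫ biproduct.π _ j = scal (M i j) :=
  biproduct.matrix_components _ i j

theorem stmt18_general {R : Type*} [CommSemiring R]
    (scal : R → (𝟙_ C ⟶ 𝟙_ C))
    (hmul : ∀ a b : R, scal (a * b) = scal a ≫ scal b) :
    -- block-diagonal direct sum, componentwise
    (∀ (n m p q : ℕ) (M : Matrix (Fin n) (Fin m) R) (N : Matrix (Fin p) (Fin q) R)
        (i : Fin n) (j : Fin m) (k : Fin p) (l : Fin q),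
      ((biproduct.ι (fun _ : Fin n => 𝟙_ C) i ≫ biprod.inl) ≫
          biprod.map (matMor scal M) (matMor scal N) ≫
          (biprod.fst ≫ biproduct.π (fun _ : Fin m => 𝟙_ C) j) = scal (M i j)) ∧
      ((biproduct.ι (fun _ : Fin n => 𝟙_ C) i ≫ biprod.inl) ≫
          biprod.map (matMor scal M) (matMor scal N) ≫
          (biprod.snd ≫ biproduct.π (fun _ : Fin q => 𝟙_ C) l) = 0) ∧
      ((biproduct.ι (fun _ : Fin p => 𝟙_ C) k ≫ biprod.inr) ≫
          biprod.map (matMor scal M) (matMor scal N) ≫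
          (biprod.fst ≫ biproduct.π (fun _ : Fin m => 𝟙_ C) j) = 0) ∧
      ((biproduct.ι (fun _ : Fin p => 𝟙_ C) k ≫ biprod.inr) ≫
          biprod.map (matMor scal M) (matMor scal N) ≫
          (biprod.snd ≫ biproduct.π (fun _ : Fin q => 𝟙_ C) l) = scal (N k l))) ∧
    -- Kronecker product, entrywise up to the canonical isomorphism 1 ⊗ 1 ≅ 1
    (∀ (n m p q : ℕ) (M : Matrix (Fin n) (Fin m) R) (N : Matrix (Fin p) (Fin q) R)
        (i : Fin n) (j : Fin m) (k : Fin p) (l : Fin q),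
      (biproduct.ι (fun _ : Fin n => 𝟙_ C) i ⊗ₘ biproduct.ι (fun _ : Fin p => 𝟙_ C) k) ≫
        (matMor scal M ⊗ₘ matMor scal N) ≫
        (biproduct.π (fun _ : Fin m => 𝟙_ C) j ⊗ₘ biproduct.π (fun _ : Fin q => 𝟙_ C) l) =
      (λ_ (𝟙_ C)).hom ≫ scal (M i j * N k l) ≫ (λ_ (𝟙_ C)).inv) := by
  refine ⟨fun n m p q M N i j k l => ?_, fun n m p q M N i j k l => ?_⟩
  · refine ⟨?_, ?_, ?_, ?_⟩ <;> simp [ι_matMor_π]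
  · rw [tensorHom_comp_tensorHom, tensorHom_comp_tensorHom, ι_matMor_π, ι_matMor_π,
      tensorHom_eq_comp_of_unit, hmul, Category.assoc]

/-- under the identification of morphisms between finite biproducts of
copies of the unit with matrices over R: the biproduct ⦃M⦄ ⊕ ⦃N⦄ is block diagonal
(stated componentwise), and the tensor ⦃M⦄ ⊗ ⦃N⦄ corresponds, up to the canonical
isomorphism 1 ⊗ 1 ≅ 1, to the Kronecker product (stated entrywise). -/
theorem stmt18 {R : Type*} [CommSemiring R]
    (hdist : ∀ H K L : C, IsIso (distL H K L))
    (hzero0 : ∀ H : C, Nonempty (H ⊗ (0 : C) ≅ (0 : C)))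
    (scal : R → (𝟙_ C ⟶ 𝟙_ C))
    (hbij : Function.Bijective scal)
    (hadd : ∀ a b : R, scal (a + b) = badd (scal a) (scal b))
    (hmul : ∀ a b : R, scal (a * b) = scal a ≫ scal b)
    (hzero : scal 0 = 0)
    (hone : scal 1 = 𝟙 (𝟙_ C)) :
    -- block-diagonal direct sum, componentwise
    (∀ (n m p q : ℕ) (M : Matrix (Fin n) (Fin m) R) (N : Matrix (Fin p) (Fin q) R)
        (i : Fin n) (j : Fin m) (k : Fin p) (l : Fin q),
      ((biproduct.ι (fun _ : Fin n => 𝟙_ C) i ≫ biprod.inl) ≫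
          biprod.map (matMor scal M) (matMor scal N) ≫
          (biprod.fst ≫ biproduct.π (fun _ : Fin m => 𝟙_ C) j) = scal (M i j)) ∧
      ((biproduct.ι (fun _ : Fin n => 𝟙_ C) i ≫ biprod.inl) ≫
          biprod.map (matMor scal M) (matMor scal N) ≫
          (biprod.snd ≫ biproduct.π (fun _ : Fin q => 𝟙_ C) l) = 0) ∧
      ((biproduct.ι (fun _ : Fin p => 𝟙_ C) k ≫ biprod.inr) ≫
          biprod.map (matMor scal M) (matMor scal N) ≫
          (biprod.fst ≫ biproduct.π (fun _ : Fin m => 𝟙_ C) j) = 0) ∧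
      ((biproduct.ι (fun _ : Fin p => 𝟙_ C) k ≫ biprod.inr) ≫
          biprod.map (matMor scal M) (matMor scal N) ≫
          (biprod.snd ≫ biproduct.π (fun _ : Fin q => 𝟙_ C) l) = scal (N k l))) ∧
    -- Kronecker product, entrywise up to the canonical isomorphism 1 ⊗ 1 ≅ 1
    (∀ (n m p q : ℕ) (M : Matrix (Fin n) (Fin m) R) (N : Matrix (Fin p) (Fin q) R)
        (i : Fin n) (j : Fin m) (k : Fin p) (l : Fin q),
      (biproduct.ι (fun _ : Fin n => 𝟙_ C) i ⊗ₘ biproduct.ι (fun _ : Fin p => 𝟙_ C) k) ≫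
        (matMor scal M ⊗ₘ matMor scal N) ≫
        (biproduct.π (fun _ : Fin m => 𝟙_ C) j ⊗ₘ biproduct.π (fun _ : Fin q => 𝟙_ C) l) =
      (λ_ (𝟙_ C)).hom ≫ scal (M i j * N k l) ≫ (λ_ (𝟙_ C)).inv) :=
  stmt18_general scal hmul
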